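/- For every λ ∈ (0, π/2), one has λ² < 3·𝒜₁(λ), i.e. λ² < (3/2)·(1/cos²(λ) − sin(λ)/(λ·cos(λ))); equivalently, the exact exponential growth rate λ of the pressure is strictly smaller than the asymptotic prediction √(3·𝒜₁). -/

import Mathlib

/-!
Multiplying by `2λ cos² λ > 0` turns the claim into `0 < 3λ − 3 sin λ cos λ − 2λ³ cos² λ`.
This function vanishes at `0`, and its derivative
`6 (sin² x − x² cos² x) + 4x³ sin x cos x` is positive on `(0, π/2)` because `x cos x < sin x`
there (i.e. `x < tan x`), so it is positive on `(0, π/2)`.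
-/

open Real Set

noncomputable def permeabilityGap (x : ℝ) : ℝ := 3 * x - 3 * sin x * cos x - 2 * x ^ 3 * cos x ^ 2

lemma mul_cos_lt_sin {x : ℝ} (h0 : 0 < x) (h1 : x < π / 2) : x * cos x < sin x := by
  have hcos : 0 < cos x := cos_pos_of_mem_Ioo ⟨by linarith [pi_pos], h1⟩
  have htan := lt_tan h0 h1
  rwa [tan_eq_sin_div_cos, lt_div_iff₀ hcos] at htan

lemma hasDerivAt_permeabilityGap (x : ℝ) :
    HasDerivAt permeabilityGap
      (6 * (sin x ^ 2 - x ^ 2 * cos x ^ 2) + 4 * x ^ 3 * sin x * cos x) x := by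
  have h := (((hasDerivAt_id x).const_mul 3).sub
    (((hasDerivAt_sin x).const_mul 3).mul (hasDerivAt_cos x))).sub
    (((hasDerivAt_pow 3 x).const_mul 2).mul ((hasDerivAt_cos x).pow 2))
  refine (show HasDerivAt permeabilityGap _ x from h).congr_deriv ?_
  norm_num
  linear_combination (-3) * sin_sq_add_cos_sq x

lemma deriv_permeabilityGap_pos {x : ℝ} (h0 : 0 < x) (h1 : x < π / 2) :
    0 < 6 * (sin x ^ 2 - x ^ 2 * cos x ^ 2) + 4 * x ^ 3 * sin x * cos x := by
  have hcos : 0 < cos x := cos_pos_of_mem_Ioo ⟨by linarith [pi_pos], h1⟩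
  have hsin : 0 < sin x := sin_pos_of_pos_of_lt_pi h0 (by linarith [pi_pos])
  have hsq : x ^ 2 * cos x ^ 2 < sin x ^ 2 := by
    rw [← mul_pow]
    exact pow_lt_pow_left₀ (mul_cos_lt_sin h0 h1) (by positivity) two_ne_zero
  have : 0 < x ^ 3 * sin x * cos x := by positivity
  linarith

lemma strictMonoOn_permeabilityGap : StrictMonoOn permeabilityGap (Icc 0 (π / 2)) := by
  refine strictMonoOn_of_hasDerivWithinAt_pos (convex_Icc _ _)
    (fun x _ ↦ (hasDerivAt_permeabilityGap x).continuousAt.continuousWithinAt)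
    (fun x _ ↦ (hasDerivAt_permeabilityGap x).hasDerivWithinAt) ?_
  rw [interior_Icc]
  exact fun x hx ↦ deriv_permeabilityGap_pos hx.1 hx.2

lemma permeabilityGap_pos {x : ℝ} (h0 : 0 < x) (h1 : x < π / 2) : 0 < permeabilityGap x := by
  have hmono := strictMonoOn_permeabilityGap ⟨le_rfl, by positivity⟩ ⟨h0.le, h1.le⟩ h0
  simpa [permeabilityGap] using hmono

/-- For every `λ ∈ (0, π/2)`, with
`𝒜₁(λ) = (1/2)·(1/cos²(λ) − sin(λ)/(λ·cos(λ)))`, one has `λ² < 3·𝒜₁(λ)`,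
i.e. `λ² < (3/2)·(1/cos²(λ) − sin(λ)/(λ·cos(λ)))`. -/
theorem stmt_19 (l : ℝ) (hl : l ∈ Ioo 0 (π / 2)) :
    l ^ 2 < (3/2) * (1 / (Real.cos l) ^ 2 - Real.sin l / (l * Real.cos l)) := by
  obtain ⟨hl0, hl2⟩ := hl
  have hcos : 0 < cos l := cos_pos_of_mem_Ioo ⟨by linarith [pi_pos], hl2⟩
  have hgap := permeabilityGap_pos hl0 hl2
  have hrhs : (3/2) * (1 / cos l ^ 2 - sin l / (l * cos l))
      = (3 * l - 3 * sin l * cos l) / (2 * l * cos l ^ 2) := by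
    field_simp
  rw [hrhs, lt_div_iff₀ (by positivity)]
  unfold permeabilityGap at hgap
  linarith
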